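/- arXiv:2205.01199 — 4 statements merged into one kernel-verified Lean document; each statement's English description precedes it below -/
import Mathlib

section
/- Suppose γ has a density q on (0,∞) with q(y) ~ a·y^{−α} as y → ∞, where a > 0 and α > 1. Then Λ(ρ) := ∫₀^∞ exp(−ρ/y) q(y) dy satisfies Λ(ρ) ~ a·Γ(α−1)·ρ^{−(α−1)} as ρ → ∞. -/
open Real Filter MeasureTheory Set

set_option maxHeartbeats 1000000

lemma aux_exp_simp {α x : ℝ} (hx0 : 0 < x) (β : ℝ) (hβ : -(β - 1) + -2 = -α) :
    Real.exp (-1/x) * x ^ (-α)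
      = (|(-1:ℝ)| * x ^ ((-1:ℝ) - 1)) • (Real.exp (-(x ^ (-1:ℝ))) * (x ^ (-1:ℝ)) ^ (β - 1)) := by
  rw [smul_eq_mul, Real.rpow_neg_one, Real.inv_rpow hx0.le, ← Real.rpow_neg hx0.le,
    abs_neg, abs_one, one_mul, show ((-1:ℝ) - 1) = (-2:ℝ) by norm_num,
    mul_comm (x ^ (-2:ℝ)), mul_assoc, ← Real.rpow_add hx0, hβ, neg_div, one_div]

lemma aux_gamma_int (α : ℝ) (hα : 1 < α) :
    IntegrableOn (fun s : ℝ => Real.exp (-1/s) * s ^ (-α)) (Set.Ioi 0) := by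
  have h0 : IntegrableOn (fun x : ℝ => Real.exp (-x) * x ^ (α - 1 - 1)) (Ioi 0) :=
    Real.GammaIntegral_convergent (by linarith : (0:ℝ) < α - 1)
  rw [← integrableOn_Ioi_comp_rpow_iff _ (p := -1) (by norm_num)] at h0
  refine h0.congr_fun (fun x hx => ?_) measurableSet_Ioi
  exact (aux_exp_simp hx (α - 1) (by ring)).symm

lemma aux_gamma_val (α : ℝ) (hα : 1 < α) :
    ∫ s in Set.Ioi (0:ℝ), Real.exp (-1/s) * s ^ (-α) = Real.Gamma (α - 1) := by
  rw [Real.Gamma_eq_integral (by linarith : (0:ℝ) < α - 1)]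
  rw [← integral_comp_rpow_Ioi (fun x : ℝ => Real.exp (-x) * x ^ (α - 1 - 1)) (p := -1)
      (by norm_num)]
  refine setIntegral_congr_fun measurableSet_Ioi (fun x hx => ?_)
  exact aux_exp_simp hx (α - 1) (by ring)

lemma aux_key (q : ℝ → ℝ) (a α : ℝ) (ha : 0 < a) (hα : 1 < α)
    (hq_nonneg : ∀ y ∈ Set.Ioi (0:ℝ), 0 ≤ q y)
    (hq_int : ∫ y in Set.Ioi (0:ℝ), q y = 1)
    (hq_meas : Measurable q)
    (hq_tail : Tendsto (fun y : ℝ => q y / (a * y ^ (-α))) atTop (nhds 1)) :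
    Tendsto (fun ρ : ℝ => ∫ s in Set.Ioi (0:ℝ), ρ ^ α * (Real.exp (-1/s) * q (ρ * s)))
      atTop (nhds (a * Real.Gamma (α - 1))) := by
  -- q is integrable on (0, ∞)
  have hq_integrable : IntegrableOn q (Set.Ioi 0) := by
    by_contra h
    rw [MeasureTheory.integral_undef h] at hq_int
    norm_num at hq_int
  -- tail bound
  obtain ⟨M, hM1, hM⟩ : ∃ M : ℝ, 1 ≤ M ∧ ∀ y, M ≤ y → q y ≤ 2 * (a * y ^ (-α)) := by
    have h2 : ∀ᶠ y in atTop, q y / (a * y ^ (-α)) ≤ 2 :=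
      hq_tail.eventually (eventually_le_nhds (by norm_num))
    obtain ⟨M₀, hM₀⟩ := eventually_atTop.mp h2
    refine ⟨max M₀ 1, le_max_right _ _, fun y hy => ?_⟩
    have hy1 : (1:ℝ) ≤ y := le_trans (le_max_right _ _) hy
    have hd : 0 < a * y ^ (-α) := mul_pos ha (Real.rpow_pos_of_pos (by linarith) _)
    have h3 := hM₀ y (le_trans (le_max_left _ _) hy)
    calc q y = q y / (a * y ^ (-α)) * (a * y ^ (-α)) := by field_simp
      _ ≤ 2 * (a * y ^ (-α)) := mul_le_mul_of_nonneg_right h3 hd.le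
  have hM0 : (0:ℝ) < M := by linarith
  -- measurability
  have hmeas_exp : Measurable fun s : ℝ => Real.exp (-1/s) :=
    Real.measurable_exp.comp (measurable_const.div measurable_id)
  have hFmeas : ∀ ρ : ℝ, Measurable (fun s => ρ ^ α * (Real.exp (-1/s) * q (ρ * s))) :=
    fun ρ => measurable_const.mul (hmeas_exp.mul (hq_meas.comp (measurable_id.const_mul ρ)))
  have hT : ∀ ρ : ℝ, MeasurableSet {s : ℝ | M ≤ ρ * s} :=
    fun ρ => measurableSet_le measurable_const (measurable_id.const_mul ρ)
  -- integrability of all pieces for ρ > 0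
  have hq_comp : ∀ ρ : ℝ, 0 < ρ → IntegrableOn (fun s => q (ρ * s)) (Set.Ioi 0) := by
    intro ρ hρ
    exact (integrableOn_Ioi_comp_mul_left_iff q 0 hρ).mpr (by simpa using hq_integrable)
  have hF_int : ∀ ρ : ℝ, 0 < ρ →
      IntegrableOn (fun s => ρ ^ α * (Real.exp (-1/s) * q (ρ * s))) (Set.Ioi 0) := by
    intro ρ hρ
    refine Integrable.mono ((hq_comp ρ hρ).const_mul (ρ ^ α))
      ((hFmeas ρ).aestronglyMeasurable) ?_
    refine (ae_restrict_iff' measurableSet_Ioi).mpr (ae_of_all _ (fun s hs => ?_))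
    have hs0 : (0:ℝ) < s := hs
    have he : Real.exp (-1/s) ≤ 1 := by
      rw [Real.exp_le_one_iff, neg_div]
      have : 0 < 1/s := by positivity
      linarith
    rw [norm_mul, norm_mul, norm_mul]
    refine mul_le_mul_of_nonneg_left ?_ (norm_nonneg _)
    calc ‖Real.exp (-1/s)‖ * ‖q (ρ * s)‖ ≤ 1 * ‖q (ρ * s)‖ := by
          refine mul_le_mul_of_nonneg_right ?_ (norm_nonneg _)
          rw [Real.norm_eq_abs, Real.abs_exp]; exact he
      _ = ‖q (ρ * s)‖ := one_mul _
  have hG_int : ∀ ρ : ℝ, 0 < ρ → Integrable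
      ({s : ℝ | M ≤ ρ * s}.indicator (fun s => ρ ^ α * (Real.exp (-1/s) * q (ρ * s))))
      (volume.restrict (Set.Ioi 0)) :=
    fun ρ hρ => (hF_int ρ hρ).indicator (hT ρ)
  have hH_int : ∀ ρ : ℝ, 0 < ρ → Integrable
      ({s : ℝ | M ≤ ρ * s}ᶜ.indicator (fun s => ρ ^ α * (Real.exp (-1/s) * q (ρ * s))))
      (volume.restrict (Set.Ioi 0)) :=
    fun ρ hρ => (hF_int ρ hρ).indicator (hT ρ).compl
  -- Part A : dominated convergence for the main part
  have partA : Tendsto (fun ρ : ℝ => ∫ s in Set.Ioi (0:ℝ),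
      {s : ℝ | M ≤ ρ * s}.indicator (fun s => ρ ^ α * (Real.exp (-1/s) * q (ρ * s))) s)
      atTop (nhds (∫ s in Set.Ioi (0:ℝ), a * (Real.exp (-1/s) * s ^ (-α)))) := by
    refine tendsto_integral_filter_of_dominated_convergence
      (fun s => 2 * a * (Real.exp (-1/s) * s ^ (-α))) ?_ ?_ ?_ ?_
    · exact Eventually.of_forall (fun ρ =>
        (((hFmeas ρ).indicator (hT ρ))).aestronglyMeasurable)
    · filter_upwards [eventually_ge_atTop (1:ℝ)] with ρ hρ1
      refine (ae_restrict_iff' measurableSet_Ioi).mpr (ae_of_all _ (fun s hs => ?_))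
      have hs0 : (0:ℝ) < s := hs
      have hρ0 : (0:ℝ) < ρ := lt_of_lt_of_le one_pos hρ1
      by_cases hsT : s ∈ {s : ℝ | M ≤ ρ * s}
      · rw [Set.indicator_of_mem hsT]
        have hρs : M ≤ ρ * s := hsT
        have hρspos : (0:ℝ) < ρ * s := lt_of_lt_of_le hM0 hρs
        have hqb := hM (ρ * s) hρs
        have hq0 : 0 ≤ q (ρ * s) := hq_nonneg _ hρspos
        have hFnn : 0 ≤ ρ ^ α * (Real.exp (-1/s) * q (ρ * s)) := by positivity
        rw [Real.norm_eq_abs, abs_of_nonneg hFnn]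
        have hmul : (ρ * s) ^ (-α) = ρ ^ (-α) * s ^ (-α) := Real.mul_rpow hρ0.le hs0.le
        have h1 : ρ ^ α * ρ ^ (-α) = 1 := by
          rw [← Real.rpow_add hρ0]; simp
        calc ρ ^ α * (Real.exp (-1/s) * q (ρ * s))
            ≤ ρ ^ α * (Real.exp (-1/s) * (2 * (a * (ρ * s) ^ (-α)))) := by
              refine mul_le_mul_of_nonneg_left
                (mul_le_mul_of_nonneg_left hqb (Real.exp_pos _).le)
                (Real.rpow_nonneg hρ0.le _)
          _ = 2 * a * (Real.exp (-1/s) * s ^ (-α)) := by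
              rw [hmul, show ρ ^ α * (Real.exp (-1/s) * (2 * (a * (ρ ^ (-α) * s ^ (-α)))))
                = (ρ ^ α * ρ ^ (-α)) * (2 * a * (Real.exp (-1/s) * s ^ (-α))) from by ring,
                h1, one_mul]
      · rw [Set.indicator_of_notMem hsT, norm_zero]
        positivity
    · exact (aux_gamma_int α hα).const_mul (2 * a)
    · refine (ae_restrict_iff' measurableSet_Ioi).mpr (ae_of_all _ (fun s hs => ?_))
      have hs0 : (0:ℝ) < s := hs
      have htend : Tendsto (fun ρ : ℝ => ρ * s) atTop atTop :=
        Tendsto.atTop_mul_const hs0 tendsto_id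
      have h1 := (hq_tail.comp htend).mul_const (a * (Real.exp (-1/s) * s ^ (-α)))
      rw [one_mul] at h1
      refine Tendsto.congr' ?_ h1
      filter_upwards [eventually_ge_atTop (max 1 (M/s))] with ρ hρ
      have hρ1 : (1:ℝ) ≤ ρ := le_trans (le_max_left _ _) hρ
      have hρ0 : (0:ℝ) < ρ := by linarith
      have hMs : M ≤ ρ * s := (div_le_iff₀ hs0).mp (le_trans (le_max_right _ _) hρ)
      have hsT : s ∈ {s : ℝ | M ≤ ρ * s} := hMs
      rw [Function.comp_apply, Set.indicator_of_mem hsT]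
      have hρs0 : (0:ℝ) < ρ * s := mul_pos hρ0 hs0
      have hmul : (ρ * s) ^ (-α) = ρ ^ (-α) * s ^ (-α) := Real.mul_rpow hρ0.le hs0.le
      have hρne : (ρ:ℝ) ^ α ≠ 0 := (Real.rpow_pos_of_pos hρ0 _).ne'
      have hsne : (s:ℝ) ^ α ≠ 0 := (Real.rpow_pos_of_pos hs0 _).ne'
      rw [hmul, Real.rpow_neg hρ0.le, Real.rpow_neg hs0.le]
      field_simp
  -- value of the limit integral
  have hval : (∫ s in Set.Ioi (0:ℝ), a * (Real.exp (-1/s) * s ^ (-α)))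
      = a * Real.Gamma (α - 1) := by
    rw [MeasureTheory.integral_const_mul, aux_gamma_val α hα]
  -- Part B : the remainder tends to 0
  have partB : Tendsto (fun ρ : ℝ => ∫ s in Set.Ioi (0:ℝ),
      {s : ℝ | M ≤ ρ * s}ᶜ.indicator (fun s => ρ ^ α * (Real.exp (-1/s) * q (ρ * s))) s)
      atTop (nhds 0) := by
    have hup : Tendsto (fun ρ : ℝ => Real.exp (-ρ/M) * ρ ^ (α - 1)) atTop (nhds 0) := by
      have h0 := tendsto_rpow_mul_exp_neg_mul_atTop_nhds_zero (α - 1) (1/M) (by positivity)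
      refine Tendsto.congr (fun ρ => ?_) h0
      rw [mul_comm]
      congr 1
      rw [show -(1/M) * ρ = -ρ/M from by ring]
    refine tendsto_of_tendsto_of_tendsto_of_le_of_le' tendsto_const_nhds hup ?_ ?_
    · filter_upwards [eventually_ge_atTop (1:ℝ)] with ρ hρ1
      have hρ0 : (0:ℝ) < ρ := lt_of_lt_of_le one_pos hρ1
      refine setIntegral_nonneg measurableSet_Ioi (fun s hs => ?_)
      have hs0 : (0:ℝ) < s := hs
      refine Set.indicator_apply_nonneg (fun _ => ?_)
      have hq0 : 0 ≤ q (ρ * s) := hq_nonneg _ (mul_pos hρ0 hs0)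
      positivity
    · filter_upwards [eventually_ge_atTop (1:ℝ)] with ρ hρ1
      have hρ0 : (0:ℝ) < ρ := lt_of_lt_of_le one_pos hρ1
      have hRHS_int : IntegrableOn
          (fun s => Real.exp (-ρ/M) * (ρ ^ α * q (ρ * s))) (Set.Ioi 0) :=
        (((hq_comp ρ hρ0).const_mul (ρ ^ α)).const_mul (Real.exp (-ρ/M)))
      have hle : (∫ s in Set.Ioi (0:ℝ),
          {s : ℝ | M ≤ ρ * s}ᶜ.indicator (fun s => ρ ^ α * (Real.exp (-1/s) * q (ρ * s))) s)
          ≤ ∫ s in Set.Ioi (0:ℝ), Real.exp (-ρ/M) * (ρ ^ α * q (ρ * s)) := by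
        refine setIntegral_mono_on (hH_int ρ hρ0) hRHS_int measurableSet_Ioi (fun s hs => ?_)
        have hs0 : (0:ℝ) < s := hs
        have hq0 : 0 ≤ q (ρ * s) := hq_nonneg _ (mul_pos hρ0 hs0)
        by_cases hsT : M ≤ ρ * s
        · rw [Set.indicator_of_notMem (by simpa using hsT)]
          positivity
        · rw [Set.indicator_of_mem (by simpa using hsT)]
          have hexp : Real.exp (-1/s) ≤ Real.exp (-ρ/M) := by
            refine Real.exp_le_exp.mpr ?_
            rw [neg_div, neg_div, neg_le_neg_iff]
            rw [div_le_div_iff₀ hM0 hs0]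
            nlinarith [le_of_not_ge hsT]
          calc ρ ^ α * (Real.exp (-1/s) * q (ρ * s))
              ≤ ρ ^ α * (Real.exp (-ρ/M) * q (ρ * s)) := by
                refine mul_le_mul_of_nonneg_left
                  (mul_le_mul_of_nonneg_right hexp hq0) (Real.rpow_nonneg hρ0.le _)
            _ = Real.exp (-ρ/M) * (ρ ^ α * q (ρ * s)) := by ring
      refine le_trans hle (le_of_eq ?_)
      rw [MeasureTheory.integral_const_mul, MeasureTheory.integral_const_mul]
      have hcv : (∫ s in Set.Ioi (0:ℝ), q (ρ * s)) = ρ⁻¹ := by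
        rw [integral_comp_mul_left_Ioi q 0 hρ0]
        simp [hq_int]
      rw [hcv]
      congr 1
      rw [← Real.rpow_neg_one ρ, ← Real.rpow_add hρ0, show α + -1 = α - 1 from by ring]
  -- combine
  have hcomb := partA.add partB
  rw [hval, add_zero] at hcomb
  refine Tendsto.congr' ?_ hcomb
  filter_upwards [eventually_gt_atTop (0:ℝ)] with ρ hρ0
  rw [← MeasureTheory.integral_add (hG_int ρ hρ0) (hH_int ρ hρ0)]
  refine setIntegral_congr_fun measurableSet_Ioi (fun s _ => ?_)
  exact Set.indicator_self_add_compl_apply _ _ _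

/-- If γ has density q on (0,∞) with q(y) ~ a y^{−α} as y → ∞ (a > 0, α > 1),
then Λ(ρ) = ∫₀^∞ exp(−ρ/y) q(y) dy ~ a Γ(α−1) ρ^{−(α−1)} as ρ → ∞. -/
theorem stmt_6 (q : ℝ → ℝ) (a α : ℝ) (ha : 0 < a) (hα : 1 < α)
    (hq_nonneg : ∀ y ∈ Set.Ioi (0:ℝ), 0 ≤ q y)
    (hq_int : ∫ y in Set.Ioi (0:ℝ), q y = 1)
    (hq_meas : Measurable q)
    (hq_tail : Tendsto (fun y : ℝ => q y / (a * y ^ (-α))) atTop (nhds 1)) :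
    Tendsto (fun ρ : ℝ =>
        (∫ y in Set.Ioi (0:ℝ), Real.exp (-ρ / y) * q y) /
          (a * Real.Gamma (α - 1) * ρ ^ (-(α - 1))))
      atTop (nhds 1) := by
  have hγ : (0:ℝ) < Real.Gamma (α - 1) := Real.Gamma_pos_of_pos (by linarith)
  have hΓ : (0:ℝ) < a * Real.Gamma (α - 1) := mul_pos ha hγ
  have hkey := (aux_key q a α ha hα hq_nonneg hq_int hq_meas hq_tail).div_const
    (a * Real.Gamma (α - 1))
  rw [div_self hΓ.ne'] at hkey
  refine Tendsto.congr' ?_ hkey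
  filter_upwards [eventually_gt_atTop (0:ℝ)] with ρ hρ0
  have hI : (∫ y in Set.Ioi (0:ℝ), Real.exp (-ρ / y) * q y)
      = ρ * ∫ s in Set.Ioi (0:ℝ), Real.exp (-1/s) * q (ρ * s) := by
    have h := integral_comp_mul_left_Ioi (fun y => Real.exp (-ρ / y) * q y) 0 hρ0
    rw [mul_zero] at h
    have h2 : (∫ x in Set.Ioi (0:ℝ), Real.exp (-ρ / (ρ * x)) * q (ρ * x))
        = ∫ x in Set.Ioi (0:ℝ), Real.exp (-1/x) * q (ρ * x) := by
      refine setIntegral_congr_fun measurableSet_Ioi (fun x hx => ?_)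
      have hx0 : (0:ℝ) < x := hx
      rw [show -ρ / (ρ * x) = -1/x from by field_simp]
    rw [h2] at h
    rw [h, smul_eq_mul, ← mul_assoc, mul_inv_cancel₀ hρ0.ne', one_mul]
  rw [MeasureTheory.integral_const_mul, hI]
  have hpow := Real.rpow_add hρ0 1 (α - 1)
  rw [Real.rpow_one, show (1:ℝ) + (α - 1) = α from by ring] at hpow
  rw [hpow, Real.rpow_neg hρ0.le]
  have h1 : (ρ:ℝ) ^ (α - 1) ≠ 0 := (Real.rpow_pos_of_pos hρ0 _).ne'
  field_simp
end

section
/- If γ is uniform on [0,1], then Λ(ρ) := ∫₀^1 exp(−ρ/y) dy satisfies Λ(ρ) ~ exp(−ρ)/ρ as ρ → ∞. -/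
open Real Filter MeasureTheory Set


lemma exp_int (c a b : ℝ) (hc : c ≠ 0) :
    ∫ y in a..b, Real.exp (c * y) = (Real.exp (c*b) - Real.exp (c*a))/c := by
  rw [intervalIntegral.integral_comp_mul_left (fun x => Real.exp x) hc, integral_exp,
    smul_eq_mul]
  ring

lemma integ (ρ : ℝ) (hρ : 0 ≤ ρ) :
    IntegrableOn (fun y => Real.exp (-ρ/y)) (Ioc (0:ℝ) 1) := by
  have hm : Measurable (fun y : ℝ => Real.exp (-ρ/y)) :=
    (measurable_const.div measurable_id).exp
  refine Integrable.mono' (g := fun _ => (1:ℝ))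
    (integrable_const (μ := volume.restrict (Ioc (0:ℝ) 1)) 1)
    hm.aestronglyMeasurable ?_
  filter_upwards [ae_restrict_mem measurableSet_Ioc] with y hy
  rw [Real.norm_eq_abs, abs_of_nonneg (Real.exp_nonneg _), Real.exp_le_one_iff, neg_div]
  simp only [neg_nonpos]
  exact div_nonneg hρ hy.1.le

lemma sqrt_atTop' : Tendsto Real.sqrt atTop atTop := by
  refine tendsto_atTop_atTop_of_monotone (fun a b hab => Real.sqrt_le_sqrt hab) (fun b => ?_)
  exact ⟨(max b 0)^2, by rw [Real.sqrt_sq (le_max_right b 0)]; exact le_max_left b 0⟩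

lemma ub (ρ : ℝ) (hρ : 4 ≤ ρ) :
    ρ * Real.exp ρ * ∫ y in Set.Ioc (0:ℝ) 1, Real.exp (-ρ / y) ≤ 1 - Real.exp (-ρ) := by
  have hρ0 : (0:ℝ) < ρ := by linarith
  have h1 : (∫ y in Set.Ioc (0:ℝ) 1, Real.exp (-ρ / y))
      ≤ ∫ y in Set.Ioc (0:ℝ) 1, Real.exp (ρ*y) * Real.exp (-(2*ρ)) := by
    refine setIntegral_mono_on (integ ρ hρ0.le) ?_ measurableSet_Ioc ?_
    · exact ((continuous_exp.comp (continuous_const.mul continuous_id)).mul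
        continuous_const).integrableOn_Ioc
    · intro y hy
      rw [← Real.exp_add, Real.exp_le_exp, neg_div]
      have hy0 : 0 < y := hy.1
      rw [neg_le, le_div_iff₀ hy0]
      nlinarith [sq_nonneg (1 - y), hy.2, hρ0.le]
  have h2 : (∫ y in Set.Ioc (0:ℝ) 1, Real.exp (ρ*y) * Real.exp (-(2*ρ)))
      = (Real.exp (ρ*1) - Real.exp (ρ*0)) / ρ * Real.exp (-(2*ρ)) := by
    rw [← intervalIntegral.integral_of_le (by norm_num : (0:ℝ) ≤ 1),
      intervalIntegral.integral_mul_const, exp_int ρ 0 1 hρ0.ne']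
  have h3 : ρ * Real.exp ρ * ((Real.exp (ρ*1) - Real.exp (ρ*0)) / ρ * Real.exp (-(2*ρ)))
      = 1 - Real.exp (-ρ) := by
    rw [mul_one, mul_zero, Real.exp_zero]
    have h4 : ρ * Real.exp ρ * ((Real.exp ρ - 1)/ρ * Real.exp (-(2*ρ)))
        = (Real.exp ρ - 1) * (Real.exp ρ * Real.exp (-(2*ρ))) := by
      field_simp
    rw [h4, ← Real.exp_add, show ρ + -(2*ρ) = -ρ by ring, sub_mul, one_mul,
      ← Real.exp_add, show ρ + -ρ = 0 by ring, Real.exp_zero]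
  calc ρ * Real.exp ρ * ∫ y in Set.Ioc (0:ℝ) 1, Real.exp (-ρ / y)
      ≤ ρ * Real.exp ρ * ((Real.exp (ρ*1) - Real.exp (ρ*0)) / ρ * Real.exp (-(2*ρ))) := by
        rw [← h2]; exact mul_le_mul_of_nonneg_left h1 (by positivity)
    _ = 1 - Real.exp (-ρ) := h3

lemma lb (ρ : ℝ) (hρ : 4 ≤ ρ) :
    (1 - (Real.sqrt ρ)⁻¹) * (1 - Real.exp (-Real.sqrt ρ))
      ≤ ρ * Real.exp ρ * ∫ y in Set.Ioc (0:ℝ) 1, Real.exp (-ρ / y) := by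
  have hρ0 : (0:ℝ) < ρ := by linarith
  set s := Real.sqrt ρ with hs
  have hs2 : 2 ≤ s := by
    rw [hs, show (2:ℝ) = Real.sqrt 4 by
      rw [show (4:ℝ) = 2^2 by norm_num, Real.sqrt_sq]; norm_num]
    exact Real.sqrt_le_sqrt hρ
  have hs0 : (0:ℝ) < s := by linarith
  set ε := s⁻¹ with hε
  have hε0 : 0 < ε := by positivity
  have hεhalf : ε ≤ 1/2 := by
    rw [hε, inv_le_comm₀ (by linarith) (by norm_num)]
    simpa using hs2
  have h1e : (0:ℝ) < 1 - ε := by linarith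
  set c := ρ / (1 - ε) with hc
  have hc0 : 0 < c := div_pos hρ0 h1e
  have hss : s * s = ρ := Real.mul_self_sqrt hρ0.le
  have hcc : c * (1 - ε) = ρ := by rw [hc]; field_simp
  -- pointwise bound on Ioc (1-ε) 1
  have h1 : (∫ y in Set.Ioc (1-ε) 1, Real.exp (c*y) * Real.exp (-c - ρ))
      ≤ ∫ y in Set.Ioc (1-ε) 1, Real.exp (-ρ / y) := by
    refine setIntegral_mono_on ?_ ((integ ρ hρ0.le).mono_set ?_) measurableSet_Ioc ?_
    · exact ((continuous_exp.comp (continuous_const.mul continuous_id)).mul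
        continuous_const).integrableOn_Ioc
    · exact Ioc_subset_Ioc (by linarith) le_rfl
    · intro y hy
      have hy1 : 1 - ε < y := hy.1
      have hy2 : y ≤ 1 := hy.2
      have hy0 : 0 < y := by linarith
      rw [← Real.exp_add, Real.exp_le_exp, neg_div]
      have key : ρ / y ≤ ρ + c * (1 - y) := by
        rw [div_le_iff₀ hy0]
        nlinarith [mul_nonneg (sub_nonneg.2 hy2) (by linarith : (0:ℝ) ≤ y - (1-ε)), hc0.le]
      linarith
  have h2 : (∫ y in Set.Ioc (1-ε) 1, Real.exp (-ρ / y))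
      ≤ ∫ y in Set.Ioc (0:ℝ) 1, Real.exp (-ρ / y) := by
    refine setIntegral_mono_set (integ ρ hρ0.le) (ae_of_all _ fun y => Real.exp_nonneg _) ?_
    exact HasSubset.Subset.eventuallyLE (Ioc_subset_Ioc (by linarith) le_rfl)
  have h3 : (∫ y in Set.Ioc (1-ε) 1, Real.exp (c*y) * Real.exp (-c - ρ))
      = (Real.exp (c*1) - Real.exp (c*(1-ε))) / c * Real.exp (-c - ρ) := by
    rw [← intervalIntegral.integral_of_le (by linarith : 1-ε ≤ 1),
      intervalIntegral.integral_mul_const, exp_int c (1-ε) 1 hc0.ne']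
  have e2 : (Real.exp (c*1) - Real.exp (c*(1-ε))) * (Real.exp ρ * Real.exp (-c - ρ))
      = 1 - Real.exp (-(c*ε)) := by
    rw [← Real.exp_add, sub_mul, ← Real.exp_add, ← Real.exp_add]
    ring_nf
    norm_num
  have e3 : ρ / c = 1 - ε := by
    rw [hc]; field_simp
  have h4 : ρ * Real.exp ρ * ((Real.exp (c*1) - Real.exp (c*(1-ε))) / c * Real.exp (-c - ρ))
      = (1 - ε) * (1 - Real.exp (-(c*ε))) := by
    calc ρ * Real.exp ρ * ((Real.exp (c*1) - Real.exp (c*(1-ε))) / c * Real.exp (-c - ρ))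
        = (ρ/c) * ((Real.exp (c*1) - Real.exp (c*(1-ε))) * (Real.exp ρ * Real.exp (-c - ρ))) := by
          field_simp
      _ = (1 - ε) * (1 - Real.exp (-(c*ε))) := by rw [e2, e3]
  have hρε : ρ * ε = s := by
    rw [hε, ← hss]; field_simp
  have hcε : s ≤ c * ε := by
    rw [← hρε]
    refine mul_le_mul_of_nonneg_right ?_ hε0.le
    rw [hc, le_div_iff₀ h1e]
    nlinarith
  have h5 : (1 - ε) * (1 - Real.exp (-s)) ≤ (1 - ε) * (1 - Real.exp (-(c*ε))) := by
    refine mul_le_mul_of_nonneg_left ?_ h1e.le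
    have : Real.exp (-(c*ε)) ≤ Real.exp (-s) := Real.exp_le_exp.2 (by linarith)
    linarith
  calc (1 - ε) * (1 - Real.exp (-s))
      ≤ (1 - ε) * (1 - Real.exp (-(c*ε))) := h5
    _ = ρ * Real.exp ρ * ((Real.exp (c*1) - Real.exp (c*(1-ε))) / c * Real.exp (-c - ρ)) := h4.symm
    _ = ρ * Real.exp ρ * ∫ y in Set.Ioc (1-ε) 1, Real.exp (c*y) * Real.exp (-c - ρ) := by
          rw [h3]
    _ ≤ ρ * Real.exp ρ * ∫ y in Set.Ioc (1-ε) 1, Real.exp (-ρ / y) := by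
          exact mul_le_mul_of_nonneg_left h1 (by positivity)
    _ ≤ ρ * Real.exp ρ * ∫ y in Set.Ioc (0:ℝ) 1, Real.exp (-ρ / y) := by
          exact mul_le_mul_of_nonneg_left h2 (by positivity)

/-- For γ uniform on [0,1], Λ(ρ) = ∫₀^1 exp(−ρ/y) dy ~ exp(−ρ)/ρ as ρ → ∞,
i.e. ρ e^ρ Λ(ρ) → 1. -/
theorem stmt_7 :
    Tendsto (fun ρ : ℝ =>
        ρ * Real.exp ρ * ∫ y in Set.Ioc (0:ℝ) 1, Real.exp (-ρ / y))
      atTop (nhds 1) := by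
  have hlow : Tendsto (fun ρ : ℝ => (1 - (Real.sqrt ρ)⁻¹) * (1 - Real.exp (-Real.sqrt ρ)))
      atTop (nhds 1) := by
    have h1 : Tendsto (fun ρ : ℝ => (Real.sqrt ρ)⁻¹) atTop (nhds 0) :=
      tendsto_inv_atTop_zero.comp sqrt_atTop'
    have h2 : Tendsto (fun ρ : ℝ => Real.exp (-Real.sqrt ρ)) atTop (nhds 0) :=
      Real.tendsto_exp_neg_atTop_nhds_zero.comp sqrt_atTop'
    have := ((tendsto_const_nhds (x := (1:ℝ)) (f := atTop)).sub h1).mul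
      ((tendsto_const_nhds (x := (1:ℝ)) (f := atTop)).sub h2)
    simpa using this
  have hup : Tendsto (fun ρ : ℝ => 1 - Real.exp (-ρ)) atTop (nhds 1) := by
    have := (tendsto_const_nhds (x := (1:ℝ)) (f := atTop)).sub
      Real.tendsto_exp_neg_atTop_nhds_zero
    simpa using this
  refine tendsto_of_tendsto_of_tendsto_of_le_of_le' hlow hup ?_ ?_
  · filter_upwards [eventually_ge_atTop (4:ℝ)] with ρ hρ using lb ρ hρ
  · filter_upwards [eventually_ge_atTop (4:ℝ)] with ρ hρ using ub ρ hρ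
end

section
/- Let g_c(p) := log(1 + c|log p|) for c > 0 (the quantile function when γ ≡ c) and g_U(p) be the solution of p = Λ_U(e^r − 1) where Λ_U(ρ) = ∫₀^1 e^{−ρ/y} dy (uniform γ). Then g_U(p)/g_c(p) → 1 as p → 0+; i.e., uniform γ on [0,1] yields the same first-order asymptotics as constant γ ≡ 1. -/
open Real Filter MeasureTheory Set

/-!
Write `Λ(ρ) = ∫₀¹ e^{-ρ/y} dy`. For `ρ ≥ 0` the integrand is at most `e^{-ρ}` on `(0, 1]` and at
least `e^{-2ρ}` on `(1/2, 1]`, so `e^{-2ρ}/2 ≤ Λ(ρ) ≤ e^{-ρ}`. With `p = Λ(ρ)` and `t = |log p|`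
this pins `ρ` between `(t - log 2)/2` and `t`, hence `g_U(p) = log (1 + ρ)` lies between the
logarithms of two affine functions of `t` with positive slope. All of these are `~ log t` as
`t → ∞`, and so is `g_c(p) = log (1 + c t)`.
-/

lemma tendsto_log_add_mul_div_log (a b : ℝ) (ha : 0 < a) :
    Tendsto (fun t => log (b + a * t) / log t) atTop (nhds 1) := by
  have h_quot : Tendsto (fun t => (b + a * t) / t) atTop (nhds a) := by
    have h := (tendsto_const_nhds (x := b)).div_atTop tendsto_id |>.add_const a
    rw [zero_add] at h
    refine h.congr' ?_
    filter_upwards [eventually_gt_atTop 0] with t ht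
    simp only [id]
    field_simp
  have h_rest := ((continuousAt_log ha.ne').tendsto.comp h_quot).div_atTop tendsto_log_atTop
  have h_pos : ∀ᶠ t in atTop, 0 < b + a * t :=
    tendsto_atTop_add_const_left _ b (tendsto_id.const_mul_atTop ha) |>.eventually_gt_atTop 0
  have h := h_rest.const_add 1
  rw [add_zero] at h
  refine h.congr' ?_
  filter_upwards [eventually_gt_atTop 1, h_pos] with t ht hbt
  have h_log : log t ≠ 0 := (log_pos ht).ne'
  simp only [Function.comp_apply, log_div hbt.ne' (by positivity : t ≠ 0)]
  field_simp
  ring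

noncomputable def lambdaUniform (ρ : ℝ) : ℝ := ∫ y in Ioc (0 : ℝ) 1, exp (-ρ / y)

lemma exp_neg_div_le_exp_neg {ρ y : ℝ} (hρ : 0 ≤ ρ) (hy : y ∈ Ioc (0 : ℝ) 1) :
    exp (-ρ / y) ≤ exp (-ρ) := by
  rw [exp_le_exp, neg_div, neg_le_neg_iff]
  exact le_div_self hρ hy.1 hy.2

lemma lambdaUniform_le_exp_neg {ρ : ℝ} (hρ : 0 ≤ ρ) : lambdaUniform ρ ≤ exp (-ρ) := by
  have h := norm_setIntegral_le_of_norm_le_const (μ := volume) (f := fun y => exp (-ρ / y))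
    (C := exp (-ρ)) measure_Ioc_lt_top fun y hy => by
      rw [norm_of_nonneg (exp_pos _).le]
      exact exp_neg_div_le_exp_neg hρ hy
  simpa [lambdaUniform, norm_of_nonneg, setIntegral_nonneg, (exp_pos _).le] using
    (le_abs_self _).trans h

lemma integrableOn_lambdaUniform {ρ : ℝ} (hρ : 0 ≤ ρ) :
    IntegrableOn (fun y => exp (-ρ / y)) (Ioc (0 : ℝ) 1) := by
  refine Measure.integrableOn_of_bounded (M := 1) (by simp)
    (measurable_const.div measurable_id).exp.aestronglyMeasurable ?_
  refine (ae_restrict_iff' measurableSet_Ioc).2 (.of_forall fun y hy => ?_)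
  rw [norm_of_nonneg (exp_pos _).le, exp_le_one_iff]
  exact div_nonpos_of_nonpos_of_nonneg (neg_nonpos.2 hρ) hy.1.le

lemma exp_neg_two_mul_div_two_le_lambdaUniform {ρ : ℝ} (hρ : 0 ≤ ρ) :
    exp (-(2 * ρ)) / 2 ≤ lambdaUniform ρ := by
  have h_sub : Ioc (1 / 2 : ℝ) 1 ⊆ Ioc 0 1 := Ioc_subset_Ioc_left (by norm_num)
  have h_half : exp (-(2 * ρ)) / 2 ≤ ∫ y in Ioc (1 / 2 : ℝ) 1, exp (-ρ / y) := by
    have h := setIntegral_ge_of_const_le (c := exp (-(2 * ρ))) measurableSet_Ioc (by simp)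
      (fun y hy => ?_) ((integrableOn_lambdaUniform hρ).mono_set h_sub)
    · norm_num at h
      linarith
    · rw [exp_le_exp, neg_div, neg_le_neg_iff, div_le_iff₀ (by linarith [hy.1])]
      nlinarith [hy.1]
  exact h_half.trans <| setIntegral_mono_set (integrableOn_lambdaUniform hρ)
    (.of_forall fun _ => (exp_pos _).le) h_sub.eventuallyLE

lemma le_neg_log_lambdaUniform {ρ : ℝ} (hρ : 0 ≤ ρ) : ρ ≤ -log (lambdaUniform ρ) := by
  have h_pos := (by positivity : 0 < exp (-(2 * ρ)) / 2).trans_le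
    (exp_neg_two_mul_div_two_le_lambdaUniform hρ)
  linarith [(log_le_iff_le_exp h_pos).2 (lambdaUniform_le_exp_neg hρ)]

lemma neg_log_lambdaUniform_le {ρ : ℝ} (hρ : 0 ≤ ρ) :
    -log (lambdaUniform ρ) ≤ 2 * ρ + log 2 := by
  have h := exp_neg_two_mul_div_two_le_lambdaUniform hρ
  have h_log := log_le_log (by positivity) h
  rw [log_div (exp_pos _).ne' two_ne_zero, log_exp] at h_log
  linarith

lemma log_one_add_bounds {ρ : ℝ} (hρ : 0 ≤ ρ) :
    log ((1 - log 2 / 2) + 2⁻¹ * |log (lambdaUniform ρ)|) ≤ log (1 + ρ) ∧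
      log (1 + ρ) ≤ log (1 + |log (lambdaUniform ρ)|) := by
  have h_upper := le_neg_log_lambdaUniform hρ
  have h_lower := neg_log_lambdaUniform_le hρ
  have h_abs : |log (lambdaUniform ρ)| = -log (lambdaUniform ρ) := abs_of_nonpos (by linarith)
  have h_log2 : log 2 < 2 := by linarith [log_two_lt_d9]
  rw [h_abs]
  constructor <;> apply log_le_log <;> linarith

/-- Let g_c(p) := log(1 + c|log p|) (quantile function for constant γ ≡ c) and let
g_U(p) solve p = Λ_U(e^r − 1) with Λ_U(ρ) = ∫₀^1 e^{−ρ/y} dy (uniform γ).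
Then g_U(p)/g_c(p) → 1 as p → 0+. -/
theorem stmt_15 (c : ℝ) (hc : 0 < c) (gU : ℝ → ℝ)
    (hgU : ∀ᶠ p in nhdsWithin (0:ℝ) (Set.Ioi 0), 0 < gU p ∧
      (∫ y in Set.Ioc (0:ℝ) 1, Real.exp (-(Real.exp (gU p) - 1) / y)) = p) :
    Tendsto (fun p : ℝ => gU p / Real.log (1 + c * |Real.log p|))
      (nhdsWithin 0 (Set.Ioi 0)) (nhds 1) := by
  have ht : Tendsto (fun p => |log p|) (nhdsWithin 0 (Ioi 0)) atTop :=
    tendsto_abs_atBot_atTop.comp tendsto_log_nhdsGT_zero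
  have h_log_ratio (a b : ℝ) (ha : 0 < a) :=
    (tendsto_log_add_mul_div_log a b ha).comp ht
  have h_upper := h_log_ratio 1 1 one_pos
  simp only [one_mul] at h_upper
  have h_gU : Tendsto (fun p => gU p / log |log p|) (nhdsWithin 0 (Ioi 0)) (nhds 1) := by
    have h_bounds : ∀ᶠ p in nhdsWithin 0 (Ioi 0),
        log ((1 - log 2 / 2) + 2⁻¹ * |log p|) / log |log p| ≤ gU p / log |log p| ∧
          gU p / log |log p| ≤ log (1 + |log p|) / log |log p| := by
      filter_upwards [hgU, ht.eventually_gt_atTop 1] with p ⟨hg, hp⟩ h_one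
      have h := log_one_add_bounds (ρ := exp (gU p) - 1) (by linarith [add_one_le_exp (gU p)])
      rw [add_sub_cancel, log_exp] at h
      rw [lambdaUniform, hp] at h
      exact ⟨by gcongr; exacts [(log_pos h_one).le, h.1],
        by gcongr; exacts [(log_pos h_one).le, h.2]⟩
    exact tendsto_of_tendsto_of_tendsto_of_le_of_le' (h_log_ratio 2⁻¹ _ (by norm_num)) h_upper
      (h_bounds.mono fun _ => And.left) (h_bounds.mono fun _ => And.right)
  have h := h_gU.div (h_log_ratio c 1 hc) one_ne_zero
  rw [div_one] at h
  refine h.congr' ?_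
  filter_upwards [ht.eventually_gt_atTop 1] with p h_one
  exact div_div_div_cancel_right₀ (log_pos h_one).ne' _ _
end

section
/- Let h ~ Exp(1) and γ uniform on [0,1], independent, and w := log(1 + γh). Then for r ≥ 0, P(w ≥ r) = ∫₀^1 exp(−(e^r − 1)/y) dy, and consequently log P(w ≥ r) ~ −e^r as r → ∞. -/
open MeasureTheory ProbabilityTheory Real Filter Set

open scoped Topology

/-!
Conditionally on `γ = y > 0`, the event `γh ≥ t` is `h ≥ t / y`, of probability `e^{-t/y}`;
averaging over `y` gives `P(γh ≥ t) = ∫₀¹ e^{-t/y} dy = E₂(t)`, and `w ≥ r` is the event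
`γh ≥ e^r - 1`. For the asymptotics, `E₂(t) ≤ e^{-t}` since `y ≤ 1`, while restricting the
integral to `[1 - δ, 1]` gives `E₂(t) ≥ δ e^{-t/(1-δ)}`; the choice `δ = 1/t` shows
`log E₂(t) = -t + O(log t)`.
-/

/-- The generalized exponential integral `E₂(t) = ∫₁^∞ e^{-tu} / u² du`, after the substitution
`u = 1 / y`. -/
noncomputable def expIntegralE2 (t : ℝ) : ℝ := ∫ y in Ioc (0 : ℝ) 1, exp (-t / y)

lemma integrableOn_exp_neg_div {t : ℝ} (ht : 0 ≤ t) :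
    IntegrableOn (fun y : ℝ => exp (-t / y)) (Ioc 0 1) := by
  refine Integrable.mono' (integrable_const 1) (by fun_prop) ?_
  filter_upwards [ae_restrict_mem measurableSet_Ioc] with y hy
  rw [norm_of_nonneg (exp_pos _).le, exp_le_one_iff, neg_div, neg_nonpos]
  exact div_nonneg ht hy.1.le

lemma expIntegralE2_le {t : ℝ} (ht : 0 ≤ t) : expIntegralE2 t ≤ exp (-t) := by
  calc expIntegralE2 t ≤ ∫ _ in Ioc (0 : ℝ) 1, exp (-t) := by
        refine setIntegral_mono_on (integrableOn_exp_neg_div ht)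
          (integrableOn_const (by simp)) measurableSet_Ioc fun y hy => ?_
        rw [exp_le_exp, neg_div, neg_le_neg_iff]
        exact le_div_self ht hy.1 hy.2
    _ = exp (-t) := by simp

lemma le_expIntegralE2 {t δ : ℝ} (ht : 0 ≤ t) (hδ0 : 0 < δ) (hδ1 : δ < 1) :
    δ * exp (-t / (1 - δ)) ≤ expIntegralE2 t := by
  have hsub : Ioc (1 - δ) 1 ⊆ Ioc (0 : ℝ) 1 := Ioc_subset_Ioc_left (by linarith)
  calc δ * exp (-t / (1 - δ)) = ∫ _ in Ioc (1 - δ) 1, exp (-t / (1 - δ)) := by simp [hδ0.le]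
    _ ≤ ∫ y in Ioc (1 - δ) 1, exp (-t / y) := by
        refine setIntegral_mono_on (integrableOn_const (by simp))
          ((integrableOn_exp_neg_div ht).mono_set hsub) measurableSet_Ioc fun y hy => ?_
        rw [exp_le_exp, neg_div, neg_div, neg_le_neg_iff]
        exact div_le_div_of_nonneg_left ht (by linarith) hy.1.le
    _ ≤ expIntegralE2 t :=
        setIntegral_mono_set (integrableOn_exp_neg_div ht)
          (ae_of_all _ fun _ => (exp_pos _).le) hsub.eventuallyLE

lemma expIntegralE2_pos {t : ℝ} (ht : 0 ≤ t) : 0 < expIntegralE2 t :=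
  lt_of_lt_of_le (by positivity) (le_expIntegralE2 ht one_half_pos one_half_lt_one)

lemma tendsto_log_expIntegralE2_div_neg :
    Tendsto (fun t => log (expIntegralE2 t) / -t) atTop (𝓝 1) := by
  have hlog : Tendsto (fun t => log t / t) atTop (𝓝 0) := by
    simpa using tendsto_pow_log_div_mul_add_atTop 1 0 1 one_ne_zero
  have hinv : Tendsto (fun t : ℝ => (1 - t⁻¹)⁻¹) atTop (𝓝 1) := by
    simpa using ((tendsto_const_nhds (x := (1 : ℝ))).sub tendsto_inv_atTop_zero).inv₀
      (by norm_num)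
  refine tendsto_of_tendsto_of_tendsto_of_le_of_le' tendsto_const_nhds
    (by simpa using hlog.add hinv) ?_ ?_
  · filter_upwards [eventually_gt_atTop 0] with t ht
    rw [le_div_iff_of_neg (by linarith), one_mul]
    calc log (expIntegralE2 t) ≤ log (exp (-t)) :=
          log_le_log (expIntegralE2_pos ht.le) (expIntegralE2_le ht.le)
      _ = -t := log_exp _
  · filter_upwards [eventually_gt_atTop 1] with t ht
    have ht0 : 0 < t := by linarith
    have hlow := le_expIntegralE2 ht0.le (inv_pos.2 ht0) (inv_lt_one_of_one_lt₀ ht)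
    have hlog_low : -log t - t / (1 - t⁻¹) ≤ log (expIntegralE2 t) := by
      calc -log t - t / (1 - t⁻¹) = log (t⁻¹ * exp (-t / (1 - t⁻¹))) := by
            rw [log_mul (by positivity) (exp_pos _).ne', log_inv, log_exp, neg_div, sub_eq_add_neg]
        _ ≤ log (expIntegralE2 t) := log_le_log (by positivity) hlow
    rw [div_le_iff_of_neg (by linarith)]
    calc (log t / t + (1 - t⁻¹)⁻¹) * -t = -log t - t / (1 - t⁻¹) := by
          field_simp
          ring
      _ ≤ log (expIntegralE2 t) := hlog_low

lemma tendsto_log_expIntegralE2_exp_sub_one :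
    Tendsto (fun r => log (expIntegralE2 (exp r - 1)) / -exp r) atTop (𝓝 1) := by
  have hshift : Tendsto (fun r => exp r - 1) atTop atTop :=
    tendsto_atTop_add_const_right _ _ tendsto_exp_atTop
  have hratio : Tendsto (fun r => (exp r - 1) / exp r) atTop (𝓝 1) := by
    have := (tendsto_const_nhds (x := (1 : ℝ))).sub tendsto_exp_neg_atTop_nhds_zero
    simp only [sub_zero] at this
    refine this.congr fun r => ?_
    rw [exp_neg]
    field_simp
  have := (tendsto_log_expIntegralE2_div_neg.comp hshift).mul hratio
  rw [mul_one] at this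
  refine this.congr' ?_
  filter_upwards [eventually_gt_atTop 0] with r hr
  have hpos : 0 < exp r - 1 := by linarith [add_one_lt_exp hr.ne']
  simp only [Function.comp_apply]
  field_simp

lemma le_log_one_add_iff {r x : ℝ} (hx : 0 ≤ x) : r ≤ log (1 + x) ↔ exp r - 1 ≤ x := by
  rw [le_log_iff_exp_le (by linarith), sub_le_iff_le_add']

section

variable {Ω : Type*} [MeasurableSpace Ω] {μ : Measure Ω} {γ h : Ω → ℝ}

lemma ProbabilityTheory.IndepFun.measure_le_mul_eq_lintegral [IsFiniteMeasure μ]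
    (hγm : Measurable γ) (hhm : Measurable h) (hind : IndepFun γ h μ) (t : ℝ) :
    μ {ω | t ≤ γ ω * h ω} = ∫⁻ y, μ.map h {x | t ≤ y * x} ∂(μ.map γ) := by
  have hS : MeasurableSet {p : ℝ × ℝ | t ≤ p.1 * p.2} :=
    measurableSet_le measurable_const (measurable_fst.mul measurable_snd)
  calc μ {ω | t ≤ γ ω * h ω} = μ.map (fun ω => (γ ω, h ω)) {p | t ≤ p.1 * p.2} :=
        (Measure.map_apply (hγm.prodMk hhm) hS).symm
    _ = ((μ.map γ).prod (μ.map h)) {p | t ≤ p.1 * p.2} := by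
        rw [hind.map_prod_eq_prod_map_map hγm.aemeasurable hhm.aemeasurable]
    _ = ∫⁻ y, μ.map h {x | t ≤ y * x} ∂(μ.map γ) := Measure.prod_apply hS

lemma map_measure_le_mul_eq_ofReal_exp [IsFiniteMeasure μ] (hhm : Measurable h)
    (hexp : ∀ t : ℝ, 0 ≤ t → (μ {ω | t ≤ h ω}).toReal = exp (-t)) {t y : ℝ} (ht : 0 ≤ t)
    (hy : 0 < y) :
    μ.map h {x | t ≤ y * x} = ENNReal.ofReal (exp (-t / y)) := by
  have hset : {x | t ≤ y * x} = Ici (t / y) := by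
    ext x
    rw [mem_ofPred_eq, mem_Ici, div_le_iff₀' hy]
  rw [hset, Measure.map_apply hhm measurableSet_Ici, neg_div, ← hexp _ (div_nonneg ht hy.le),
    ENNReal.ofReal_toReal (measure_ne_top _ _)]
  rfl

lemma measure_le_mul_eq_expIntegralE2 [IsFiniteMeasure μ] (hγm : Measurable γ)
    (hhm : Measurable h) (hγlaw : μ.map γ = volume.restrict (Icc (0 : ℝ) 1))
    (hexp : ∀ t : ℝ, 0 ≤ t → (μ {ω | t ≤ h ω}).toReal = exp (-t)) (hind : IndepFun γ h μ)
    {t : ℝ} (ht : 0 ≤ t) :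
    (μ {ω | t ≤ γ ω * h ω}).toReal = expIntegralE2 t := by
  rw [hind.measure_le_mul_eq_lintegral hγm hhm, hγlaw,
    Measure.restrict_congr_set Ioc_ae_eq_Icc.symm,
    setLIntegral_congr_fun measurableSet_Ioc fun y hy =>
      map_measure_le_mul_eq_ofReal_exp hhm hexp ht hy.1,
    ← ofReal_integral_eq_lintegral_ofReal (integrableOn_exp_neg_div ht)
      (ae_of_all _ fun _ => (exp_pos _).le),
    ENNReal.toReal_ofReal (integral_nonneg fun _ => (exp_pos _).le)]
  rfl

lemma ae_nonneg_of_map_eq_restrict_Icc (hγm : Measurable γ)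
    (hγlaw : μ.map γ = volume.restrict (Icc (0 : ℝ) 1)) : ∀ᵐ ω ∂μ, 0 ≤ γ ω :=
  ae_of_ae_map hγm.aemeasurable (hγlaw ▸ (ae_restrict_mem measurableSet_Icc).mono fun _ hy => hy.1)

lemma ae_nonneg_of_measure_le_toReal_eq_exp [IsProbabilityMeasure μ] (hhm : Measurable h)
    (hexp : ∀ t : ℝ, 0 ≤ t → (μ {ω | t ≤ h ω}).toReal = exp (-t)) : ∀ᵐ ω ∂μ, 0 ≤ h ω := by
  refine (ae_iff_measure_eq (measurableSet_le measurable_const hhm).nullMeasurableSet).2 ?_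
  rw [measure_univ, ← ENNReal.toReal_eq_one_iff, hexp 0 le_rfl, neg_zero, exp_zero]

end

/-- For h ~ Exp(1) and γ uniform on [0,1] independent, w := log(1 + γh) satisfies
P(w ≥ r) = ∫₀^1 exp(−(e^r − 1)/y) dy for r ≥ 0, and log P(w ≥ r) ~ −e^r as r → ∞. -/
theorem stmt_17 {Ω : Type*} [MeasureSpace Ω] [IsProbabilityMeasure (ℙ : Measure Ω)]
    (γ h : Ω → ℝ) (hγm : Measurable γ) (hhm : Measurable h)
    (hγlaw : Measure.map γ ℙ = volume.restrict (Set.Icc (0:ℝ) 1))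
    (hexp : ∀ t : ℝ, 0 ≤ t → (ℙ {ω | t ≤ h ω}).toReal = Real.exp (-t))
    (hind : IndepFun γ h) :
    (∀ r : ℝ, 0 ≤ r → (ℙ {ω | r ≤ Real.log (1 + γ ω * h ω)}).toReal
        = ∫ y in Set.Ioc (0:ℝ) 1, Real.exp (-(Real.exp r - 1) / y)) ∧
    Tendsto (fun r : ℝ =>
        Real.log ((ℙ {ω | r ≤ Real.log (1 + γ ω * h ω)}).toReal) / (-(Real.exp r)))
      atTop (nhds 1) := by
  have hprod_nonneg : ∀ᵐ ω, 0 ≤ γ ω * h ω := by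
    filter_upwards [ae_nonneg_of_map_eq_restrict_Icc hγm hγlaw,
      ae_nonneg_of_measure_le_toReal_eq_exp hhm hexp] with ω hγ hh using mul_nonneg hγ hh
  have htail : ∀ r : ℝ, 0 ≤ r →
      (ℙ {ω | r ≤ log (1 + γ ω * h ω)}).toReal = expIntegralE2 (exp r - 1) := by
    intro r hr
    have hevent : {ω | r ≤ log (1 + γ ω * h ω)} =ᵐ[ℙ] {ω | exp r - 1 ≤ γ ω * h ω} := by
      filter_upwards [hprod_nonneg] with ω hω
      exact propext (le_log_one_add_iff hω)
    rw [measure_congr hevent]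
    exact measure_le_mul_eq_expIntegralE2 hγm hhm hγlaw hexp hind
      (sub_nonneg.2 (one_le_exp hr))
  refine ⟨htail, tendsto_log_expIntegralE2_exp_sub_one.congr' ?_⟩
  filter_upwards [eventually_ge_atTop 0] with r hr
  rw [htail r hr]
end
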